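/- Let τ be in the complex upper half-plane, let k ≥ 1 be an integer, let w ∈ ℂ with w ∉ L_τ, and let z ∈ ℂ with |z| < dist(w, L_τ). Then the series Σ_{l≥1} D(k, l, τ, w)·z^{l−1} converges absolutely and P_{k+1}(τ, z − w) = (1/k)·Σ_{l≥1} D(k, l, τ, w)·z^{l−1}. -/

import Mathlib

open Complex

noncomputable section

/-- The complex number `2πi`. -/
def twoPiI : ℂ := 2 * (Real.pi : ℂ) * Complex.I

/-- The lattice point `2πi·mτ + 2πi·n` attached to `p = (m, n) ∈ ℤ²`. -/
def latPt (τ : ℂ) (p : ℤ × ℤ) : ℂ := twoPiI * p.1 * τ + twoPiI * p.2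

/-- The lattice `L_τ = 2πiτℤ + 2πiℤ ⊆ ℂ`. -/
def latticeOf (τ : ℂ) : Set ℂ := {ω : ℂ | ∃ p : ℤ × ℤ, ω = latPt τ p}

/-- `r_τ = min { |ω| : ω ∈ L_τ, ω ≠ 0 }`. -/
def rLat (τ : ℂ) : ℝ := sInf {r : ℝ | ∃ p : ℤ × ℤ, p ≠ 0 ∧ r = ‖latPt τ p‖}

/-- The Eisenstein series `E_k(τ)`, defined by the `q`-expansion for even `k`
and equal to `0` for odd `k`. -/
def Ek (k : ℕ) (τ : ℂ) : ℂ :=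
  if Even k then
    -((bernoulli k : ℚ) : ℂ) / (Nat.factorial k : ℂ) +
      (2 / (Nat.factorial (k - 1) : ℂ)) *
        ∑' n : ℕ, ((ArithmeticFunction.sigma (k - 1) (n + 1) : ℕ) : ℂ) *
          Complex.exp (twoPiI * τ) ^ (n + 1)
  else 0

/-- The Weierstrass elliptic function `℘(z, σ, ς)` with periods `σ`, `ς`. -/
def wp (z σ ς : ℂ) : ℂ :=
  (z ^ 2)⁻¹ + ∑' p : {p : ℤ × ℤ // p ≠ 0},
    (((z - (p.1.1 : ℂ) * σ - (p.1.2 : ℂ) * ς) ^ 2)⁻¹ - (((p.1.1 : ℂ) * σ + (p.1.2 : ℂ) * ς) ^ 2)⁻¹)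

/-- `P₂(τ, z) = ℘(z, 2πiτ, 2πi) + E₂(τ)`. -/
def P2 (τ z : ℂ) : ℂ := wp z (twoPiI * τ) twoPiI + Ek 2 τ

/-- The Weierstrass zeta function of the lattice `L_τ`. -/
def wzeta (τ z : ℂ) : ℂ :=
  z⁻¹ + ∑' p : {p : ℤ × ℤ // p ≠ 0},
    ((z - latPt τ p.1)⁻¹ + (latPt τ p.1)⁻¹ + z * ((latPt τ p.1) ^ 2)⁻¹)

/-- `P₁(τ, z) = ζ(τ, z) − z·E₂(τ)`. -/
def P1 (τ z : ℂ) : ℂ := wzeta τ z - z * Ek 2 τ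

/-- `P_k(τ, z) = ((−1)^{k−1}/(k−1)!)·(∂/∂z)^{k−1} P₁(τ, z)`. -/
def Pk (k : ℕ) (τ z : ℂ) : ℂ :=
  ((-1 : ℂ) ^ (k - 1) / (Nat.factorial (k - 1) : ℂ)) * iteratedDeriv (k - 1) (P1 τ) z

/-- `C(k, l, τ) = (−1)^{k+1}·((k+l−1)!/((k−1)!(l−1)!))·E_{k+l}(τ)`. -/
def Ckl (k l : ℕ) (τ : ℂ) : ℂ :=
  (-1 : ℂ) ^ (k + 1) *
    ((Nat.factorial (k + l - 1) : ℂ) / ((Nat.factorial (k - 1) : ℂ) * (Nat.factorial (l - 1) : ℂ))) *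
    Ek (k + l) τ

/-- `D(k, l, τ, z) = (−1)^{k+1}·((k+l−1)!/((k−1)!(l−1)!))·P_{k+l}(τ, z)`. -/
def Dkl (k l : ℕ) (τ z : ℂ) : ℂ :=
  (-1 : ℂ) ^ (k + 1) *
    ((Nat.factorial (k + l - 1) : ℂ) / ((Nat.factorial (k - 1) : ℂ) * (Nat.factorial (l - 1) : ℂ))) *
    Pk (k + l) τ z

end

/-!
The function `P₁(τ, ·)` is holomorphic off the lattice, because the terms of the series for `ζ`
are `O(|ω|⁻³)` locally uniformly, and it is odd, because the lattice is symmetric. So `P₁^{(k)}` is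
the sum of its absolutely convergent Taylor series at `w` on the ball of radius `dist(w, L_τ)`.
By oddness `P_{k+1}(τ, z - w) = -P₁^{(k)}(w - z)/k!`, and expanding at `w` with
`P₁^{(k+l)}(w) = (-1)^{k+l} (k+l)! P_{k+l+1}(τ, w)` produces the coefficients `D(k, l+1, τ, w)/k`.
-/

open Metric
open scoped Nat

lemma Complex.summable_norm_taylorSeries_on_ball {E : Type*} [NormedAddCommGroup E]
    [NormedSpace ℂ E] [CompleteSpace E] {f : ℂ → E} {c : ℂ} {r : ℝ}
    (hf : DifferentiableOn ℂ f (ball c r)) {z : ℂ} (hz : z ∈ ball c r) :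
    Summable fun n : ℕ ↦ ‖(n ! : ℂ)⁻¹ • (z - c) ^ n • iteratedDeriv n f c‖ := by
  obtain ⟨r', hzr', hr'⟩ := exists_between (mem_ball.mp hz)
  lift r' to NNReal using dist_nonneg.trans hzr'.le
  have hp := (hf.mono <| closedBall_subset_ball hr').hasFPowerSeriesOnBall
    (dist_nonneg.trans_lt hzr')
  have hzc : z - c ∈ eball (0 : ℂ) (cauchyPowerSeries f c r').radius := by
    refine eball_subset_eball hp.r_le ?_
    rwa [eball_coe, mem_ball_iff_norm, sub_zero, ← dist_eq_norm]
  refine (FormalMultilinearSeries.summable_norm_apply _ hzc).congr fun n ↦ ?_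
  have hdiag : iteratedFDeriv ℂ n f c (fun _ ↦ z - c) = (z - c) ^ n • iteratedDeriv n f c := by
    simpa only [iteratedDeriv_eq_iteratedFDeriv, smul_eq_mul, mul_one, Finset.prod_const,
      Finset.card_fin] using (iteratedFDeriv ℂ n f c).map_smul_univ (fun _ ↦ z - c) (fun _ ↦ 1)
  rw [← hdiag, ← hp.factorial_smul, ← Nat.cast_smul_eq_nsmul ℂ, smul_smul,
    inv_mul_cancel₀ (Nat.cast_ne_zero.mpr n.factorial_ne_zero), one_smul]

lemma Function.Odd.iteratedDeriv_neg {𝕜 F : Type*} [NontriviallyNormedField 𝕜]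
    [NormedAddCommGroup F] [NormedSpace 𝕜 F] {f : 𝕜 → F} (hf : f.Odd) (n : ℕ) (x : 𝕜) :
    iteratedDeriv n f (-x) = (-1 : 𝕜) ^ (n + 1) • iteratedDeriv n f x := by
  have h := iteratedDeriv_comp_neg n f x
  rw [show (fun y ↦ f (-y)) = -f from funext hf, _root_.iteratedDeriv_neg] at h
  rw [pow_succ, mul_smul, neg_one_smul, h, smul_smul, ← mul_pow]
  simp

lemma norm_twoPiI : ‖twoPiI‖ = 2 * Real.pi := by
  simp [twoPiI, Real.pi_pos.le]

lemma latPt_eq_twoPiI_mul (τ : ℂ) (p : ℤ × ℤ) :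
    latPt τ p = twoPiI * (p.1 * τ + p.2) := by
  rw [latPt]; ring

lemma latPt_neg (τ : ℂ) (p : ℤ × ℤ) : latPt τ (-p) = -latPt τ p := by
  simp only [latPt, Prod.fst_neg, Prod.snd_neg, Int.cast_neg]; ring

lemma latPt_ne_zero {τ : ℂ} (hτ : 0 < τ.im) {p : ℤ × ℤ} (hp : p ≠ 0) : latPt τ p ≠ 0 := by
  have h2π : twoPiI ≠ 0 := norm_ne_zero_iff.mp (by rw [norm_twoPiI]; positivity)
  rw [latPt_eq_twoPiI_mul]
  refine mul_ne_zero h2π fun h ↦ hp ?_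
  have h1 : p.1 = 0 := by simpa [hτ.ne'] using congrArg Complex.im h
  have h2 : p.2 = 0 := by simpa [h1] using h
  exact Prod.ext h1 h2

lemma zero_mem_latticeOf (τ : ℂ) : (0 : ℂ) ∈ latticeOf τ :=
  ⟨0, by simp [latPt]⟩

lemma summable_inv_norm_latPt_pow_three {τ : ℂ} (hτ : 0 < τ.im) :
    Summable fun p : ℤ × ℤ ↦ (‖latPt τ p‖ ^ 3)⁻¹ := by
  have h := (finTwoArrowEquiv ℤ).symm.summable_iff.mpr
    (EisensteinSeries.summable_norm_eisSummand le_rfl ⟨τ, hτ⟩)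
  refine (h.mul_left ((2 * Real.pi)⁻¹ ^ 3)).congr fun p ↦ ?_
  simp [EisensteinSeries.eisSummand, latPt_eq_twoPiI_mul, norm_twoPiI, mul_pow, mul_comm]

lemma norm_inv_sub_add_inv_add_mul_inv_sq_le {y ω : ℂ} {M δ : ℝ} (hδ : 0 < δ) (hω : ω ≠ 0)
    (hyM : ‖y‖ ≤ M) (hyω : δ ≤ ‖y - ω‖) :
    ‖(y - ω)⁻¹ + ω⁻¹ + y * (ω ^ 2)⁻¹‖ ≤ M ^ 2 * (M + δ) / δ * (‖ω‖ ^ 3)⁻¹ := by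
  have hyω₀ : 0 < ‖y - ω‖ := hδ.trans_le hyω
  have hω₀ : 0 < ‖ω‖ := norm_pos_iff.mpr hω
  have hM : 0 ≤ M := (norm_nonneg y).trans hyM
  have hfar : δ * ‖ω‖ / (M + δ) ≤ ‖y - ω‖ := by
    have := norm_sub_norm_le ω y
    rw [norm_sub_rev] at this
    rw [div_le_iff₀ (by positivity)]
    nlinarith
  have hid : (y - ω)⁻¹ + ω⁻¹ + y * (ω ^ 2)⁻¹ = y ^ 2 / ((y - ω) * ω ^ 2) := by
    field_simp [norm_pos_iff.mp hyω₀]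
    ring
  rw [hid, norm_div, norm_mul, norm_pow, norm_pow]
  calc ‖y‖ ^ 2 / (‖y - ω‖ * ‖ω‖ ^ 2) ≤ M ^ 2 / (δ * ‖ω‖ / (M + δ) * ‖ω‖ ^ 2) := by gcongr
    _ = M ^ 2 * (M + δ) / δ * (‖ω‖ ^ 3)⁻¹ := by field_simp

lemma differentiableOn_P1_ball {τ : ℂ} (hτ : 0 < τ.im) {x : ℂ} {δ : ℝ} (hδ : 0 < δ)
    (hsep : ∀ y ∈ ball x δ, ∀ ω ∈ latticeOf τ, δ ≤ ‖y - ω‖) :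
    DifferentiableOn ℂ (P1 τ) (ball x δ) := by
  have hne : ∀ y ∈ ball x δ, ∀ ω ∈ latticeOf τ, y - ω ≠ 0 := fun y hy ω hω ↦
    norm_pos_iff.mp (hδ.trans_le (hsep y hy ω hω))
  have hsum : DifferentiableOn ℂ (fun y ↦ ∑' p : {p : ℤ × ℤ // p ≠ 0},
      ((y - latPt τ p.1)⁻¹ + (latPt τ p.1)⁻¹ + y * ((latPt τ p.1) ^ 2)⁻¹)) (ball x δ) := by
    refine differentiableOn_tsum_of_summable_norm
      (((summable_inv_norm_latPt_pow_three hτ).subtype _).mul_left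
        ((‖x‖ + δ) ^ 2 * (‖x‖ + δ + δ) / δ)) (fun p ↦ ?_) isOpen_ball fun p y hy ↦ ?_
    · exact (((differentiableOn_id.sub_const _).inv fun y hy ↦ hne y hy _ ⟨p, rfl⟩).add_const
        _).add (differentiableOn_id.mul_const _)
    · exact norm_inv_sub_add_inv_add_mul_inv_sq_le hδ (latPt_ne_zero hτ p.2)
        (norm_le_of_mem_closedBall (ball_subset_closedBall hy)) (hsep y hy _ ⟨p, rfl⟩)
  have hy₀ : ∀ y ∈ ball x δ, y ≠ 0 := fun y hy ↦ by
    simpa using hne y hy 0 (zero_mem_latticeOf τ)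
  exact ((differentiableOn_id.inv hy₀).add hsum).sub (differentiableOn_id.mul_const _)

lemma analyticOnNhd_P1 {τ : ℂ} (hτ : 0 < τ.im) :
    AnalyticOnNhd ℂ (P1 τ) (closure (latticeOf τ))ᶜ := by
  refine DifferentiableOn.analyticOnNhd (fun x hx ↦ ?_) isClosed_closure.isOpen_compl
  have hd : 0 < infDist x (latticeOf τ) :=
    (infDist_pos_iff_notMem_closure ⟨0, zero_mem_latticeOf τ⟩).mp hx
  have hsep : ∀ y ∈ ball x (infDist x (latticeOf τ) / 2), ∀ ω ∈ latticeOf τ,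
      infDist x (latticeOf τ) / 2 ≤ ‖y - ω‖ := fun y hy ω hω ↦ by
    have := infDist_le_dist_of_mem (x := x) hω
    have := dist_triangle x y ω
    rw [mem_ball, dist_comm] at hy
    rw [← dist_eq_norm]
    linarith
  exact ((differentiableOn_P1_ball hτ (half_pos hd) hsep).differentiableAt
    (ball_mem_nhds x (half_pos hd))).differentiableWithinAt

lemma P1_odd (τ : ℂ) : (P1 τ).Odd := by
  intro y
  let e : {p : ℤ × ℤ // p ≠ 0} ≃ {p : ℤ × ℤ // p ≠ 0} :=
    (Equiv.neg _).subtypeEquiv fun _ ↦ by simp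
  have hsum : ∑' p : {p : ℤ × ℤ // p ≠ 0},
      ((-y - latPt τ p.1)⁻¹ + (latPt τ p.1)⁻¹ + -y * (latPt τ p.1 ^ 2)⁻¹) =
      -∑' p : {p : ℤ × ℤ // p ≠ 0},
      ((y - latPt τ p.1)⁻¹ + (latPt τ p.1)⁻¹ + y * (latPt τ p.1 ^ 2)⁻¹) := by
    rw [← tsum_neg, ← e.tsum_eq]
    refine tsum_congr fun p ↦ ?_
    simp only [e, Equiv.subtypeEquiv_apply, Equiv.neg_apply, latPt_neg]
    rw [show -y - -latPt τ p = -(y - latPt τ p) by ring, inv_neg, inv_neg, neg_sq]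
    ring
  simp only [P1, wzeta, hsum, inv_neg]
  ring

lemma Pk_succ_sub (τ : ℂ) (k : ℕ) (z w : ℂ) :
    Pk (k + 1) τ (z - w) = -(k ! : ℂ)⁻¹ * iteratedDeriv k (P1 τ) (w - z) := by
  have h := (P1_odd τ).iteratedDeriv_neg k (w - z)
  rw [neg_sub, smul_eq_mul] at h
  have hsq : ((-1 : ℂ) ^ k) ^ 2 = 1 := by rw [← pow_mul, pow_mul']; simp
  rw [Pk, Nat.add_sub_cancel, h, pow_succ]
  linear_combination (-(k ! : ℂ)⁻¹ * iteratedDeriv k (P1 τ) (w - z)) * hsq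

lemma Dkl_succ_succ_mul_pow (τ w z : ℂ) (m l : ℕ) :
    Dkl (m + 1) (l + 1) τ w * z ^ l = -(m ! : ℂ)⁻¹ *
      ((l ! : ℂ)⁻¹ • (-z) ^ l • iteratedDeriv l (iteratedDeriv (m + 1) (P1 τ)) w) := by
  have hcomp :
      iteratedDeriv l (iteratedDeriv (m + 1) (P1 τ)) = iteratedDeriv (m + 1 + l) (P1 τ) := by
    simp only [iteratedDeriv_eq_iterate, ← Function.iterate_add_apply, add_comm l]
  have hsq : ((-1 : ℂ) ^ m) ^ 2 = 1 := by rw [← pow_mul, pow_mul']; simp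
  rw [hcomp, Dkl, Pk, smul_eq_mul, smul_eq_mul, neg_pow z,
    show m + 1 + (l + 1) - 1 = m + 1 + l by omega, Nat.add_sub_cancel, Nat.add_sub_cancel]
  field_simp [Nat.factorial_ne_zero]
  linear_combination (-(-1 : ℂ) ^ l * iteratedDeriv (m + 1 + l) (P1 τ) w * z ^ l) * hsq

theorem stmt10_general (τ : ℂ) (hτ : 0 < τ.im) (k : ℕ) (hk : 1 ≤ k) (w : ℂ)
    (z : ℂ) (hz : ‖z‖ < Metric.infDist w (latticeOf τ)) :
    Summable (fun l : ℕ => ‖Dkl k (l + 1) τ w * z ^ l‖) ∧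
    Pk (k + 1) τ (z - w) = (1 / (k : ℂ)) * ∑' l : ℕ, Dkl k (l + 1) τ w * z ^ l := by
  obtain ⟨m, rfl⟩ := Nat.exists_eq_add_of_le' hk
  have hg :
      DifferentiableOn ℂ (iteratedDeriv (m + 1) (P1 τ)) (ball w (infDist w (latticeOf τ))) := by
    rw [iteratedDeriv_eq_iterate, ← infDist_closure]
    exact ((analyticOnNhd_P1 hτ).iterated_deriv _).differentiableOn.mono ball_infDist_subset_compl
  have hmem : w - z ∈ ball w (infDist w (latticeOf τ)) := by
    rwa [mem_ball, dist_eq_norm, sub_sub_cancel_left, norm_neg]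
  have hterm := Dkl_succ_succ_mul_pow τ w z m
  rw [← sub_sub_cancel_left w z] at hterm
  refine ⟨?_, ?_⟩
  · simp_rw [hterm, norm_mul]
    exact (Complex.summable_norm_taylorSeries_on_ball hg hmem).mul_left _
  · rw [Pk_succ_sub, funext hterm, tsum_mul_left, Complex.taylorSeries_eq_on_ball hg hmem,
      Nat.factorial_succ]
    push_cast
    field_simp

/-- for `k ≥ 1`, `w ∉ L_τ` and `|z| < dist(w, L_τ)`, the series
`Σ_{l≥1} D(k, l, τ, w)·z^{l−1}` converges absolutely and
`P_{k+1}(τ, z − w) = (1/k)·Σ_{l≥1} D(k, l, τ, w)·z^{l−1}`. -/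
theorem stmt10 (τ : ℂ) (hτ : 0 < τ.im) (k : ℕ) (hk : 1 ≤ k) (w : ℂ)
    (hw : w ∉ latticeOf τ) (z : ℂ) (hz : ‖z‖ < Metric.infDist w (latticeOf τ)) :
    Summable (fun l : ℕ => ‖Dkl k (l + 1) τ w * z ^ l‖) ∧
    Pk (k + 1) τ (z - w) = (1 / (k : ℂ)) * ∑' l : ℕ, Dkl k (l + 1) τ w * z ^ l :=
  stmt10_general τ hτ k hk w z hz
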